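/- Assume A is indecomposable and the Weyl group W is infinite. Let ω ∈ W be such that ℓ(ω^l) = |l|·ℓ(ω) for all l ∈ ℤ, and let α ∈ Δ₊. Then the sign of ω^k α is a monotonic function of k ∈ ℤ: either for all integers k ≤ l, ω^k α ∈ Δ₋ implies ω^l α ∈ Δ₋, or for all integers k ≤ l, ω^k α ∈ Δ₊ implies ω^l α ∈ Δ₊. -/

import Mathlib

/-!
The heart of the matter is that every real root is positive or negative: if `ℓ(w s_i) > ℓ(w)`
then `w e_i ≥ 0`. This goes by induction on `ℓ(w)`. If `s_j` ends a reduced word for `w`, write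
`w = u v` with `u` of minimal length in the coset `w ⟨s_i, s_j⟩`; then `u e_i, u e_j ≥ 0` by
induction, and a rank-two computation shows that `v e_i` is a nonnegative combination of `e_i` and
`e_j`. In rank two the group `⟨s_i, s_j⟩` is infinite when `a_ij a_ji ≥ 4`, and the images of
`e_i` stay in the positive cone; otherwise it is dihedral of order `2m` with `m ∈ {2, 3, 4, 6}`.

By induction on `ℓ(v)`, when `ℓ(u v) = ℓ(u) + ℓ(v)` every positive real root made negative by `v`
stays negative under `u v`. For straight `ω` the lengths of `ω^(c-b)` and `ω^(b-a)` add up whenever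
`a ≤ b ≤ c`, so along `k ↦ ω^k α` any change of sign, in either direction, is permanent, and only
one direction of change can occur. Imaginary roots never change sign: `W` only moves the
fundamental set `K` upwards.
-/

open Matrix Filter Pointwise

namespace KacMoodyPaper

variable {n : ℕ}

/-- `A` is a generalized Cartan matrix. -/
def IsGCM (A : Matrix (Fin n) (Fin n) ℤ) : Prop :=
  (∀ i, A i i = 2) ∧ (∀ i j, i ≠ j → A i j ≤ 0) ∧ (∀ i j, A i j = 0 ↔ A j i = 0)

/-- The simple reflection `s i` as a linear map: `s i v = v - (A *ᵥ v) i • e i`. -/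
def sMap (A : Matrix (Fin n) (Fin n) ℤ) (i : Fin n) : (Fin n → ℤ) →ₗ[ℤ] (Fin n → ℤ) where
  toFun v := v - (A.mulVec v i) • Pi.single i 1
  map_add' x y := by
    simp only [Matrix.mulVec_add, Pi.add_apply, add_smul]
    abel
  map_smul' c x := by
    simp only [Matrix.mulVec_smul, Pi.smul_apply, smul_eq_mul, RingHom.id_apply, smul_sub,
      smul_smul]

theorem sMap_involutive (A : Matrix (Fin n) (Fin n) ℤ) (i : Fin n) (h2 : A i i = 2)
    (v : Fin n → ℤ) : sMap A i (sMap A i v) = v := by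
  have hAe : A.mulVec (Pi.single i 1) i = A i i := by
    simp [Matrix.mulVec_single]
  simp only [sMap, LinearMap.coe_mk, AddHom.coe_mk, Matrix.mulVec_sub, Matrix.mulVec_smul,
    Pi.sub_apply, Pi.smul_apply, hAe, h2, smul_eq_mul]
  ring_nf

/-- The simple reflection `s i` as a `ℤ`-linear automorphism of `ℤ^n`
(determined by `s i (e j) = e j - A i j • e i`). -/
def s (A : Matrix (Fin n) (Fin n) ℤ) (h2 : ∀ i, A i i = 2) (i : Fin n) :
    (Fin n → ℤ) ≃ₗ[ℤ] (Fin n → ℤ) :=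
  LinearEquiv.ofLinear (sMap A i) (sMap A i)
    (LinearMap.ext fun v => sMap_involutive A i (h2 i) v)
    (LinearMap.ext fun v => sMap_involutive A i (h2 i) v)

/-- The Coxeter element `w = s 1 ∘ s 2 ∘ ⋯ ∘ s n` (applying `s n` first). -/
def cox (A : Matrix (Fin n) (Fin n) ℤ) (h2 : ∀ i, A i i = 2) :
    (Fin n → ℤ) ≃ₗ[ℤ] (Fin n → ℤ) :=
  (List.ofFn (fun i : Fin n => s A h2 i)).prod

/-- The Weyl group: the subgroup of `GL(n, ℤ)` generated by the simple reflections. -/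
def weyl (A : Matrix (Fin n) (Fin n) ℤ) (h2 : ∀ i, A i i = 2) :
    Subgroup ((Fin n → ℤ) ≃ₗ[ℤ] (Fin n → ℤ)) :=
  Subgroup.closure (Set.range (s A h2))

/-- The word length of `ω` with respect to the generators `s 1, …, s n`. -/
noncomputable def len (A : Matrix (Fin n) (Fin n) ℤ) (h2 : ∀ i, A i i = 2)
    (ω : (Fin n → ℤ) ≃ₗ[ℤ] (Fin n → ℤ)) : ℕ :=
  sInf {k | ∃ f : Fin k → Fin n, ω = (List.ofFn (fun j => s A h2 (f j))).prod}

/-- `v ∈ ℤ^n` is positive: nonzero with all coordinates `≥ 0`. -/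
def IsPos (v : Fin n → ℤ) : Prop := v ≠ 0 ∧ ∀ i, 0 ≤ v i

/-- The height of a vector: the sum of its coordinates. -/
def ht (v : Fin n → ℤ) : ℤ := ∑ i, v i

/-- The graph `Γ` on `{1, …, n}` with an edge between `i ≠ j` iff `A i j ≠ 0`. -/
def gcmGraph (A : Matrix (Fin n) (Fin n) ℤ) (hsym : ∀ i j, A i j = 0 ↔ A j i = 0) :
    SimpleGraph (Fin n) where
  Adj i j := i ≠ j ∧ A i j ≠ 0
  symm := by
    constructor
    rintro i j ⟨hij, h⟩
    exact ⟨hij.symm, fun h0 => h ((hsym i j).mpr h0)⟩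
  loopless := by constructor; rintro i ⟨h, -⟩; exact h rfl

/-- `A` is indecomposable: the graph `Γ` is connected. -/
def Indecomposable (A : Matrix (Fin n) (Fin n) ℤ) (hsym : ∀ i j, A i j = 0 ↔ A j i = 0) :
    Prop :=
  (gcmGraph A hsym).Connected

/-- `A` is of indefinite type: there is `u > 0` (componentwise) with `A·u < 0` componentwise. -/
def IndefiniteType (A : Matrix (Fin n) (Fin n) ℤ) : Prop :=
  ∃ u : Fin n → ℤ, (∀ i, 0 < u i) ∧ ∀ i, (A.mulVec u) i < 0

/-- The fundamental set `K`: positive vectors with connected support and `A·v ≤ 0`. -/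
def fundK (A : Matrix (Fin n) (Fin n) ℤ) (hsym : ∀ i j, A i j = 0 ↔ A j i = 0) :
    Set (Fin n → ℤ) :=
  {v | IsPos v ∧ ((gcmGraph A hsym).induce {i | v i ≠ 0}).Connected ∧
    ∀ i, (A.mulVec v) i ≤ 0}

/-- The real roots: the `W`-orbits of the standard basis vectors. -/
def realRoots (A : Matrix (Fin n) (Fin n) ℤ) (h2 : ∀ i, A i i = 2) : Set (Fin n → ℤ) :=
  {v | ∃ g ∈ weyl A h2, ∃ i : Fin n, v = g (Pi.single i 1)}

/-- The positive imaginary roots: the `W`-orbit of the fundamental set `K`. -/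
def posImRoots (A : Matrix (Fin n) (Fin n) ℤ) (h2 : ∀ i, A i i = 2)
    (hsym : ∀ i j, A i j = 0 ↔ A j i = 0) : Set (Fin n → ℤ) :=
  {v | ∃ g ∈ weyl A h2, ∃ k ∈ fundK A hsym, v = g k}

/-- The set of roots `Δ`. -/
def roots (A : Matrix (Fin n) (Fin n) ℤ) (h2 : ∀ i, A i i = 2)
    (hsym : ∀ i j, A i j = 0 ↔ A j i = 0) : Set (Fin n → ℤ) :=
  realRoots A h2 ∪ posImRoots A h2 hsym ∪ (-(posImRoots A h2 hsym))

/-- The set of positive roots `Δ₊`. -/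
def posRoots (A : Matrix (Fin n) (Fin n) ℤ) (h2 : ∀ i, A i i = 2)
    (hsym : ∀ i j, A i j = 0 ↔ A j i = 0) : Set (Fin n → ℤ) :=
  {v ∈ roots A h2 hsym | IsPos v}

/-- The set of negative roots `Δ₋ = -Δ₊`. -/
def negRoots (A : Matrix (Fin n) (Fin n) ℤ) (h2 : ∀ i, A i i = 2)
    (hsym : ∀ i j, A i j = 0 ↔ A j i = 0) : Set (Fin n → ℤ) :=
  -(posRoots A h2 hsym)

section WordLength

variable {G ι : Type*} [Group G] (s : ι → G)

noncomputable def wordLength (g : G) : ℕ :=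
  sInf {k | ∃ f : Fin k → ι, g = (List.ofFn fun j => s (f j)).prod}

theorem wordLength_prod_le (l : List ι) : wordLength s (l.map s).prod ≤ l.length :=
  Nat.sInf_le ⟨fun j => l[(j : ℕ)], by rw [List.ofFn_getElem_eq_map]⟩

theorem wordLength_gen_le (i : ι) : wordLength s (s i) ≤ 1 := by
  simpa using wordLength_prod_le s [i]

theorem wordLength_one : wordLength s 1 = 0 := by
  simpa using wordLength_prod_le s []

variable {s}

theorem exists_word_of_mem_closure (hs : ∀ i, s i * s i = 1) {g : G}
    (hg : g ∈ Subgroup.closure (Set.range s)) : ∃ l : List ι, (l.map s).prod = g := by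
  induction hg using Subgroup.closure_induction with
  | mem x hx => obtain ⟨i, rfl⟩ := hx; exact ⟨[i], by simp⟩
  | one => exact ⟨[], rfl⟩
  | mul x y _ _ hx hy =>
    obtain ⟨l₁, rfl⟩ := hx; obtain ⟨l₂, rfl⟩ := hy
    exact ⟨l₁ ++ l₂, by simp⟩
  | inv x _ hx =>
    obtain ⟨l, rfl⟩ := hx
    exact ⟨l.reverse, by
      simp [List.prod_inv_reverse, inv_eq_of_mul_eq_one_right (hs _), Function.comp_def]⟩

theorem exists_reduced_word (hs : ∀ i, s i * s i = 1) {g : G}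
    (hg : g ∈ Subgroup.closure (Set.range s)) :
    ∃ l : List ι, l.length = wordLength s g ∧ (l.map s).prod = g := by
  obtain ⟨l, rfl⟩ := exists_word_of_mem_closure hs hg
  obtain ⟨f, hf⟩ : wordLength s (l.map s).prod ∈ {k | ∃ f : Fin k → ι,
      (l.map s).prod = (List.ofFn fun j => s (f j)).prod} :=
    Nat.sInf_mem ⟨l.length, fun j => l[(j : ℕ)], by rw [List.ofFn_getElem_eq_map]⟩
  exact ⟨List.ofFn f, by simp, by rw [List.map_ofFn]; exact hf.symm⟩

theorem eq_one_of_wordLength_eq_zero (hs : ∀ i, s i * s i = 1) {g : G}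
    (hg : g ∈ Subgroup.closure (Set.range s)) (h : wordLength s g = 0) : g = 1 := by
  obtain ⟨l, hl, rfl⟩ := exists_reduced_word hs hg
  simp_all

theorem wordLength_mul_le (hs : ∀ i, s i * s i = 1) {g h : G}
    (hg : g ∈ Subgroup.closure (Set.range s)) (hh : h ∈ Subgroup.closure (Set.range s)) :
    wordLength s (g * h) ≤ wordLength s g + wordLength s h := by
  obtain ⟨l₁, hl₁, rfl⟩ := exists_reduced_word hs hg
  obtain ⟨l₂, hl₂, rfl⟩ := exists_reduced_word hs hh
  simpa [hl₁, hl₂] using wordLength_prod_le s (l₁ ++ l₂)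

theorem wordLength_mul_gen_le (hs : ∀ i, s i * s i = 1) {g : G}
    (hg : g ∈ Subgroup.closure (Set.range s)) (i : ι) :
    wordLength s (g * s i) ≤ wordLength s g + 1 :=
  (wordLength_mul_le hs hg (Subgroup.subset_closure ⟨i, rfl⟩)).trans
    (Nat.add_le_add_left (wordLength_gen_le s i) _)

theorem exists_eq_mul_gen_of_wordLength_pos (hs : ∀ i, s i * s i = 1) {g : G}
    (hg : g ∈ Subgroup.closure (Set.range s)) (h : 0 < wordLength s g) :
    ∃ u i, g = u * s i ∧ wordLength s u + 1 = wordLength s g := by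
  obtain ⟨l, hl, rfl⟩ := exists_reduced_word hs hg
  obtain ⟨l, i, rfl⟩ := (List.eq_nil_or_concat l).resolve_left (by rintro rfl; simp_all)
  have hu : (l.map s).prod ∈ Subgroup.closure (Set.range s) :=
    list_prod_mem (by simpa using fun i _ => Subgroup.subset_closure (Set.mem_range_self i))
  have hle := wordLength_prod_le s l
  have hge := wordLength_mul_gen_le hs hu i
  simp only [List.concat_eq_append, List.length_append, List.length_singleton, List.map_append,
    List.map_singleton, List.prod_append, List.prod_singleton] at hl hge ⊢
  exact ⟨_, i, rfl, by omega⟩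

theorem map_prod_eq_neg_one_pow {χ : G →* ℤˣ} (hχ : ∀ i, χ (s i) = -1) (l : List ι) :
    χ (l.map s).prod = (-1) ^ l.length := by
  induction l with
  | nil => simp
  | cons i l ih => simp [ih, hχ, pow_succ']

theorem map_eq_neg_one_pow_wordLength (hs : ∀ i, s i * s i = 1) {χ : G →* ℤˣ}
    (hχ : ∀ i, χ (s i) = -1) {g : G} (hg : g ∈ Subgroup.closure (Set.range s)) :
    χ g = (-1) ^ wordLength s g := by
  obtain ⟨l, hl, rfl⟩ := exists_reduced_word hs hg
  rw [← hl, map_prod_eq_neg_one_pow hχ]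

theorem wordLength_mul_gen (hs : ∀ i, s i * s i = 1) {χ : G →* ℤˣ} (hχ : ∀ i, χ (s i) = -1)
    {g : G} (hg : g ∈ Subgroup.closure (Set.range s)) (i : ι) :
    wordLength s (g * s i) = wordLength s g + 1 ∨
      wordLength s g = wordLength s (g * s i) + 1 := by
  have hgi : g * s i ∈ Subgroup.closure (Set.range s) :=
    mul_mem hg (Subgroup.subset_closure (Set.mem_range_self i))
  have hup := wordLength_mul_gen_le hs hg i
  have hdown := wordLength_mul_gen_le hs hgi i
  rw [mul_assoc, hs, mul_one] at hdown
  have hne : wordLength s (g * s i) ≠ wordLength s g := fun h => by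
    have := map_eq_neg_one_pow_wordLength hs hχ hgi
    rw [map_mul, hχ, h, ← map_eq_neg_one_pow_wordLength hs hχ hg, mul_neg_one] at this
    exact units_ne_neg_self (χ g) this.symm
  omega

end WordLength

section Alternating

variable {G : Type*} [Group G]

def altProd (a b : G) : ℕ → G
  | 0 => 1
  | r + 1 => altProd b a r * a

@[simp] theorem altProd_zero (a b : G) : altProd a b 0 = 1 := rfl

theorem altProd_succ (a b : G) (r : ℕ) : altProd a b (r + 1) = altProd b a r * a := rfl

theorem altProd_succ' (a b : G) (r : ℕ) :
    altProd a b (r + 1) = (if Even r then a else b) * altProd a b r := by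
  induction r generalizing a b with
  | zero => simp [altProd_succ]
  | succ r ih =>
    rw [altProd_succ, ih, altProd_succ a b r, mul_assoc]
    by_cases hr : Even r <;> simp [hr, Nat.even_add_one]

theorem altProd_mem {H : Subgroup G} {a b : G} (ha : a ∈ H) (hb : b ∈ H) (r : ℕ) :
    altProd a b r ∈ H := by
  induction r generalizing a b with
  | zero => exact H.one_mem
  | succ r ih => exact H.mul_mem (ih hb ha) ha

variable {a b c g : G}

theorem altProd_succ_mul_self (ha : a * a = 1) (r : ℕ) :
    altProd a b (r + 1) * a = altProd b a r := by
  rw [altProd_succ, mul_assoc, ha, mul_one]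

def IsAltProd (a b g : G) : Prop := ∃ r, g = altProd a b r ∨ g = altProd b a r

noncomputable def altLength (a b g : G) : ℕ := sInf {r | g = altProd a b r ∨ g = altProd b a r}

theorem isAltProd_comm : IsAltProd a b g ↔ IsAltProd b a g := by
  simp only [IsAltProd, or_comm]

theorem altLength_comm : altLength a b g = altLength b a g := by
  simp only [altLength, or_comm]

theorem isAltProd_and_altLength_le {r : ℕ} (h : g = altProd a b r ∨ g = altProd b a r) :
    IsAltProd a b g ∧ altLength a b g ≤ r :=
  ⟨⟨r, h⟩, Nat.sInf_le h⟩

theorem IsAltProd.eq_altProd_altLength (hg : IsAltProd a b g) :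
    g = altProd a b (altLength a b g) ∨ g = altProd b a (altLength a b g) :=
  Nat.sInf_mem hg

theorem altLength_altProd_le (r : ℕ) : altLength a b (altProd a b r) ≤ r :=
  (isAltProd_and_altLength_le (Or.inl rfl)).2

theorem exists_mul_altProd_eq (ha : a * a = 1) (hb : b * b = 1) (hc : c = a ∨ c = b) (r : ℕ) :
    ∃ r' ≤ r + 1, c * altProd a b r = altProd a b r' ∨ c * altProd a b r = altProd b a r' := by
  have hcc : c * c = 1 := by rcases hc with rfl | rfl <;> assumption
  by_cases hcr : c = if Even r then a else b
  · exact ⟨r + 1, le_rfl, Or.inl (by rw [altProd_succ', hcr])⟩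
  rcases r with _ | r
  · refine ⟨1, le_rfl, Or.inr ?_⟩
    rcases hc with rfl | rfl <;> simp_all [altProd_succ]
  · have hcr' : c = if Even r then a else b := by
      rcases hc with rfl | rfl <;> by_cases hr : Even r <;> simp_all [Nat.even_add_one]
    refine ⟨r, by omega, Or.inl ?_⟩
    rw [altProd_succ', ← hcr', ← mul_assoc, hcc, one_mul]

theorem IsAltProd.mul_left (ha : a * a = 1) (hb : b * b = 1) (hg : IsAltProd a b g)
    (hc : c = a ∨ c = b) : IsAltProd a b (c * g) ∧ altLength a b (c * g) ≤ altLength a b g + 1 := by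
  rcases hg.eq_altProd_altLength with h | h
  · obtain ⟨r, hr, h'⟩ := exists_mul_altProd_eq ha hb hc (altLength a b g)
    rw [← h] at h'
    exact (isAltProd_and_altLength_le h').imp_right (·.trans hr)
  · obtain ⟨r, hr, h'⟩ := exists_mul_altProd_eq hb ha hc.symm (altLength a b g)
    rw [← h] at h'
    rw [isAltProd_comm, altLength_comm]
    exact (isAltProd_and_altLength_le h').imp_right (·.trans hr)

theorem isAltProd_altProd_mul (ha : a * a = 1) (hc : c = a ∨ c = b) (r : ℕ) :
    IsAltProd a b (altProd a b r * c) := by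
  rcases hc with rfl | rfl
  · rcases r with _ | r
    · exact ⟨1, Or.inl rfl⟩
    · exact ⟨r, Or.inr (altProd_succ_mul_self ha r)⟩
  · exact ⟨r + 1, Or.inr rfl⟩

theorem IsAltProd.mul_right (ha : a * a = 1) (hb : b * b = 1) (hg : IsAltProd a b g)
    (hc : c = a ∨ c = b) : IsAltProd a b (g * c) := by
  obtain ⟨r, rfl | rfl⟩ := hg
  · exact isAltProd_altProd_mul ha hc r
  · exact isAltProd_comm.2 (isAltProd_altProd_mul hb hc.symm r)

theorem IsAltProd.eq_altProd_of_altLength_lt (ha : a * a = 1) (hg : IsAltProd a b g)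
    (h : altLength a b g < altLength a b (g * a)) : g = altProd b a (altLength a b g) := by
  rcases hg.eq_altProd_altLength with hg' | hg'
  · rcases hr : altLength a b g with _ | r
    · rw [hr] at hg'; simpa using hg'
    · rw [hr] at hg' h
      have := altLength_altProd_le (a := b) (b := a) r
      rw [← altProd_succ_mul_self ha, ← hg', altLength_comm] at this
      omega
  · exact hg'

theorem altProd_add_eq_sub (ha : a * a = 1) (hb : b * b = 1) {m : ℕ}
    (hrel : altProd a b m = altProd b a m) {t : ℕ} (ht : t ≤ m) :
    altProd a b (m + t) = altProd b a (m - t) := by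
  induction t with
  | zero => simpa using hrel
  | succ t ih =>
    obtain ⟨k, hk⟩ : ∃ k, m - t = k + 1 := ⟨m - t - 1, by omega⟩
    have hletter : (if Even (m + t) then a else b) = if Even k then b else a := by
      have : Even (m + t) ↔ ¬Even k := by
        simp only [Nat.even_iff]; omega
      by_cases hk' : Even k <;> simp [this, hk']
    have hsq : (if Even k then b else a) * (if Even k then b else a) = 1 := by
      split_ifs <;> assumption
    rw [← add_assoc, altProd_succ', ih (by omega), hk, altProd_succ' b a k, hletter, ← mul_assoc,
      hsq, one_mul, show m - (t + 1) = k by omega]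

theorem altProd_add_two_mul (ha : a * a = 1) (hb : b * b = 1) {m : ℕ}
    (hrel : altProd a b m = altProd b a m) (r : ℕ) : altProd a b (r + 2 * m) = altProd a b r := by
  induction r with
  | zero => simpa [two_mul] using altProd_add_eq_sub ha hb hrel le_rfl
  | succ r ih =>
    rw [show r + 1 + 2 * m = r + 2 * m + 1 by omega, altProd_succ', ih, altProd_succ' a b r]
    simp [Nat.even_add]

theorem altLength_altProd_le_of_eq (ha : a * a = 1) (hb : b * b = 1) {m : ℕ} (hm : 1 ≤ m)
    (hrel : altProd a b m = altProd b a m) (r : ℕ) : altLength a b (altProd a b r) ≤ m := by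
  induction r using Nat.strong_induction_on with
  | _ r ih =>
    by_cases h₁ : r ≤ m
    · exact (altLength_altProd_le r).trans h₁
    by_cases h₂ : r < 2 * m
    · rw [show r = m + (r - m) by omega, altProd_add_eq_sub ha hb hrel (by omega),
        altLength_comm]
      exact (altLength_altProd_le _).trans (by omega)
    · rw [show r = r - 2 * m + 2 * m by omega, altProd_add_two_mul ha hb hrel]
      exact ih _ (by omega)

end Alternating

section RankTwoCosets

variable {G ι : Type*} [Group G] {s : ι → G}

theorem altProd_mem_closure (i j : ι) (r : ℕ) :
    altProd (s i) (s j) r ∈ Subgroup.closure (Set.range s) :=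
  altProd_mem (Subgroup.subset_closure (Set.mem_range_self i))
    (Subgroup.subset_closure (Set.mem_range_self j)) r

theorem IsAltProd.mem_closure {i j : ι} {g : G} (hg : IsAltProd (s i) (s j) g) :
    g ∈ Subgroup.closure (Set.range s) := by
  obtain ⟨r, rfl | rfl⟩ := hg
  exacts [altProd_mem_closure i j r, altProd_mem_closure j i r]

theorem wordLength_altProd_le (hs : ∀ i, s i * s i = 1) (i j : ι) (r : ℕ) :
    wordLength s (altProd (s i) (s j) r) ≤ r := by
  induction r generalizing i j with
  | zero => simp [wordLength_one]
  | succ r ih =>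
    exact (wordLength_mul_gen_le hs (altProd_mem_closure j i r) i).trans (by simpa using ih j i)

theorem wordLength_mul_le_add_altLength (hs : ∀ i, s i * s i = 1) {i j : ι} {u v : G}
    (hu : u ∈ Subgroup.closure (Set.range s)) (hv : IsAltProd (s i) (s j) v) :
    wordLength s (u * v) ≤ wordLength s u + altLength (s i) (s j) v := by
  refine (wordLength_mul_le hs hu hv.mem_closure).trans (Nat.add_le_add_left ?_ _)
  rcases hv.eq_altProd_altLength with h | h <;> rw [h] <;> nth_rewrite 2 [← h]
  exacts [wordLength_altProd_le hs i j _, wordLength_altProd_le hs j i _]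

/-- `u` is the element of minimal length in the coset `w ⟨s i, s j⟩`. -/
theorem exists_eq_minimal_mul_isAltProd (hs : ∀ i, s i * s i = 1) {χ : G →* ℤˣ}
    (hχ : ∀ i, χ (s i) = -1) {w : G} (hw : w ∈ Subgroup.closure (Set.range s)) (i j : ι) :
    ∃ u v, u ∈ Subgroup.closure (Set.range s) ∧ IsAltProd (s i) (s j) v ∧ w = u * v ∧
      wordLength s w = wordLength s u + altLength (s i) (s j) v ∧
      ∀ p, p = i ∨ p = j → wordLength s u < wordLength s (u * s p) := by
  set T : Set ℕ := {t | ∃ v, IsAltProd (s i) (s j) v ∧ altLength (s i) (s j) v = t ∧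
    wordLength s w = wordLength s (w * v⁻¹) + t}
  have h0 : 0 ∈ T := ⟨1, ⟨0, Or.inl rfl⟩, Nat.le_zero.1 (altLength_altProd_le 0), by simp⟩
  have hbdd : BddAbove T := ⟨wordLength s w, fun t ⟨_, _, _, h⟩ => by omega⟩
  obtain ⟨v, hv, hvt, hwv⟩ := Nat.sSup_mem ⟨0, h0⟩ hbdd
  have hu : w * v⁻¹ ∈ Subgroup.closure (Set.range s) := mul_mem hw (inv_mem hv.mem_closure)
  refine ⟨w * v⁻¹, v, hu, hv, by group, by rw [hvt]; exact hwv, fun p hp => ?_⟩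
  by_contra hle
  have hdrop : wordLength s (w * v⁻¹ * s p) + 1 = wordLength s (w * v⁻¹) := by
    have := wordLength_mul_gen hs hχ hu p
    omega
  obtain ⟨hv', hv'len⟩ := hv.mul_left (hs i) (hs j) (hp.imp (congrArg s) (congrArg s))
  have hinv : w * (s p * v)⁻¹ = w * v⁻¹ * s p := by
    rw [_root_.mul_inv_rev, inv_eq_of_mul_eq_one_right (hs p), mul_assoc]
  have hle' := wordLength_mul_le_add_altLength hs (hinv ▸ mul_mem hu
    (Subgroup.subset_closure (Set.mem_range_self p))) hv'
  rw [inv_mul_cancel_right, hinv] at hle'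
  have hmem : sSup T + 1 ∈ T := ⟨s p * v, hv', by omega, by rw [hinv]; omega⟩
  have := le_csSup hbdd hmem
  omega

end RankTwoCosets

section Reflections

variable {A : Matrix (Fin n) (Fin n) ℤ} {h2 : ∀ i, A i i = 2}

theorem s_apply (i : Fin n) (v : Fin n → ℤ) :
    s A h2 i v = v - A.mulVec v i • Pi.single i 1 := rfl

theorem s_mul_self (i : Fin n) : s A h2 i * s A h2 i = 1 :=
  LinearEquiv.ext (sMap_involutive A i (h2 i))

theorem s_mem_weyl (i : Fin n) : s A h2 i ∈ weyl A h2 :=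
  Subgroup.subset_closure (Set.mem_range_self i)

theorem s_apply_single_self (i : Fin n) : s A h2 i (Pi.single i 1) = -Pi.single i 1 := by
  rw [s_apply, Matrix.mulVec_single_one, Matrix.col_apply, h2]
  module

theorem s_apply_of_ne {i t : Fin n} (h : t ≠ i) (v : Fin n → ℤ) : s A h2 i v t = v t := by
  simp [s_apply, Pi.single_eq_of_ne h]

theorem det_s (i : Fin n) : LinearEquiv.det (s A h2 i) = -1 := by
  have hmat : (s A h2 i : (Fin n → ℤ) →ₗ[ℤ] (Fin n → ℤ)) = Matrix.toLin'
      (1 + Matrix.replicateCol Unit (Pi.single i (1 : ℤ)) * Matrix.replicateRow Unit (-A i)) := by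
    ext v t
    by_cases ht : t = i
    · subst ht
      simp [s_apply, Matrix.mulVec, dotProduct, sub_eq_add_neg, Pi.single_apply]
    · simp [s_apply, Matrix.mulVec, dotProduct, ht]
  ext
  rw [LinearEquiv.coe_det, hmat, LinearMap.det_toLin',
    Matrix.det_one_add_replicateCol_mul_replicateRow]
  simp [dotProduct, Pi.single_apply, h2 i]

theorem s_apply_pair_left (i j : Fin n) (x y : ℤ) :
    s A h2 i (x • Pi.single i 1 + y • Pi.single j 1) =
      (-A i j * y - x) • Pi.single i 1 + y • Pi.single j 1 := by
  simp only [s_apply, Matrix.mulVec_add, Matrix.mulVec_smul, Pi.add_apply, Pi.smul_apply,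
    Matrix.mulVec_single_one, Matrix.col_apply, h2, smul_eq_mul]
  module

theorem s_apply_pair_right (i j : Fin n) (x y : ℤ) :
    s A h2 j (x • Pi.single i 1 + y • Pi.single j 1) =
      x • Pi.single i 1 + (-A j i * x - y) • Pi.single j 1 := by
  simp only [s_apply, Matrix.mulVec_add, Matrix.mulVec_smul, Pi.add_apply, Pi.smul_apply,
    Matrix.mulVec_single_one, Matrix.col_apply, h2, smul_eq_mul]
  module

end Reflections

section RankTwo

variable {A : Matrix (Fin n) (Fin n) ℤ} {h2 : ∀ i, A i i = 2} {i j : Fin n}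

/-- Coordinates of `altProd (s j) (s i) r (e i)` in the basis `e i, e j`, for `a = -A i j` and
`b = -A j i`. -/
def altCoords (a b : ℤ) : ℕ → ℤ × ℤ
  | 0 => (1, 0)
  | r + 1 =>
    if Even r then ((altCoords a b r).1, b * (altCoords a b r).1 - (altCoords a b r).2)
    else (a * (altCoords a b r).2 - (altCoords a b r).1, (altCoords a b r).2)

theorem altProd_s_apply_single (r : ℕ) :
    altProd (s A h2 j) (s A h2 i) r (Pi.single i 1) =
      (altCoords (-A i j) (-A j i) r).1 • Pi.single i 1 +
        (altCoords (-A i j) (-A j i) r).2 • Pi.single j 1 := by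
  induction r with
  | zero => simp [altCoords]
  | succ r ih =>
    rw [altProd_succ', LinearEquiv.mul_apply, ih]
    by_cases hr : Even r
    · simp only [hr, if_true, s_apply_pair_right, altCoords]
    · simp only [hr, if_false, s_apply_pair_left, altCoords]

/-- The parity-dependent inequalities, saying that the next step of the recursion cannot decrease
a coordinate, are what carry the induction. -/
theorem altCoords_nonneg {a b : ℤ} (ha : 1 ≤ a) (hb : 1 ≤ b) (hab : 4 ≤ a * b) (r : ℕ) :
    (0 ≤ (altCoords a b r).1 ∧ 0 ≤ (altCoords a b r).2) ∧
      (Even r → 2 * (altCoords a b r).2 ≤ b * (altCoords a b r).1 ∧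
        a * (altCoords a b r).2 ≤ 2 * (altCoords a b r).1) ∧
      (¬Even r → 2 * (altCoords a b r).1 ≤ a * (altCoords a b r).2 ∧
        b * (altCoords a b r).1 ≤ 2 * (altCoords a b r).2) := by
  induction r with
  | zero => simp [altCoords]; linarith
  | succ r ih =>
    obtain ⟨⟨hx, hy⟩, heven, hodd⟩ := ih
    by_cases hr : Even r
    · obtain ⟨h₁, h₂⟩ := heven hr
      simp only [altCoords, hr, if_true, Nat.even_add_one, not_true_eq_false, not_false_eq_true,
        false_imp_iff, true_implies, true_and]
      refine ⟨⟨?_, ?_⟩, ?_, ?_⟩ <;> nlinarith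
    · obtain ⟨h₁, h₂⟩ := hodd hr
      simp only [altCoords, hr, if_false, Nat.even_add_one, not_true_eq_false, not_false_eq_true,
        false_imp_iff, true_implies, and_true]
      refine ⟨⟨?_, ?_⟩, ?_, ?_⟩ <;> nlinarith

theorem s_braid_relation {m : ℕ}
    (h : (A i j = 0 ∧ A j i = 0 ∧ m = 2) ∨ (A i j = -1 ∧ A j i = -1 ∧ m = 3) ∨
      (A i j = -1 ∧ A j i = -2 ∧ m = 4) ∨ (A i j = -1 ∧ A j i = -3 ∧ m = 6)) :
    altProd (s A h2 i) (s A h2 j) m = altProd (s A h2 j) (s A h2 i) m := by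
  ext v : 1
  rcases h with ⟨hij, hji, rfl⟩ | ⟨hij, hji, rfl⟩ | ⟨hij, hji, rfl⟩ | ⟨hij, hji, rfl⟩ <;>
  · simp only [altProd_succ, altProd_zero, one_mul, LinearEquiv.mul_apply, s_apply,
      Matrix.mulVec_sub, Matrix.mulVec_smul, Pi.sub_apply, Pi.smul_apply, smul_eq_mul,
      Matrix.mulVec_single_one, Matrix.col_apply, hij, hji, h2]
    match_scalars <;> ring

theorem exists_altProd_s_eq_of_mul_lt_four (hij : A i j ≤ 0) (hji : A j i ≤ 0)
    (hzero : A i j = 0 ↔ A j i = 0) (h4 : A i j * A j i < 4) :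
    ∃ m, 1 ≤ m ∧ altProd (s A h2 i) (s A h2 j) m = altProd (s A h2 j) (s A h2 i) m ∧
      ∀ r < m, 0 ≤ (altCoords (-A i j) (-A j i) r).1 ∧ 0 ≤ (altCoords (-A i j) (-A j i) r).2 := by
  have hcases : (A i j = 0 ∧ A j i = 0) ∨ (A i j = -1 ∧ A j i = -1) ∨ (A i j = -1 ∧ A j i = -2) ∨
      (A i j = -2 ∧ A j i = -1) ∨ (A i j = -1 ∧ A j i = -3) ∨ (A i j = -3 ∧ A j i = -1) := by
    rcases eq_or_lt_of_le hij with h | h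
    · exact Or.inl ⟨h, hzero.1 h⟩
    have : A j i < 0 := lt_of_le_of_ne hji (mt hzero.2 h.ne)
    have : -3 ≤ A i j := by nlinarith
    have : -3 ≤ A j i := by nlinarith
    interval_cases (A i j) <;> interval_cases (A j i) <;> simp_all
  rcases hcases with ⟨h, h'⟩ | ⟨h, h'⟩ | ⟨h, h'⟩ | ⟨h, h'⟩ | ⟨h, h'⟩ | ⟨h, h'⟩
  · refine ⟨2, by norm_num, s_braid_relation (by simp [h, h']), fun r hr => ?_⟩
    interval_cases r <;> simp [altCoords, h']
  · refine ⟨3, by norm_num, s_braid_relation (by simp [h, h']), fun r hr => ?_⟩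
    interval_cases r <;> simp [altCoords, h, h', Nat.even_iff]
  · refine ⟨4, by norm_num, s_braid_relation (by simp [h, h']), fun r hr => ?_⟩
    interval_cases r <;> simp [altCoords, h, h', Nat.even_iff]
  · refine ⟨4, by norm_num, (s_braid_relation (by simp [h, h'])).symm, fun r hr => ?_⟩
    interval_cases r <;> simp [altCoords, h, h', Nat.even_iff]
  · refine ⟨6, by norm_num, s_braid_relation (by simp [h, h']), fun r hr => ?_⟩
    interval_cases r <;> simp [altCoords, h, h', Nat.even_iff]
  · refine ⟨6, by norm_num, (s_braid_relation (by simp [h, h'])).symm, fun r hr => ?_⟩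
    interval_cases r <;> simp [altCoords, h, h', Nat.even_iff]

theorem IsAltProd.s_apply_single_eq_of_altLength_lt (hij : A i j ≤ 0) (hji : A j i ≤ 0)
    (hzero : A i j = 0 ↔ A j i = 0) {v : (Fin n → ℤ) ≃ₗ[ℤ] (Fin n → ℤ)}
    (hv : IsAltProd (s A h2 i) (s A h2 j) v)
    (h : altLength (s A h2 i) (s A h2 j) v < altLength (s A h2 i) (s A h2 j) (v * s A h2 i)) :
    ∃ x y : ℤ, 0 ≤ x ∧ 0 ≤ y ∧ v (Pi.single i 1) = x • Pi.single i 1 + y • Pi.single j 1 := by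
  have hv' := hv.eq_altProd_of_altLength_lt (s_mul_self i) h
  set t := altLength (s A h2 i) (s A h2 j) v
  suffices 0 ≤ (altCoords (-A i j) (-A j i) t).1 ∧ 0 ≤ (altCoords (-A i j) (-A j i) t).2 from
    ⟨_, _, this.1, this.2, hv' ▸ altProd_s_apply_single t⟩
  by_cases h4 : 4 ≤ A i j * A j i
  · have : A i j ≠ 0 := fun h0 => by simp [h0] at h4
    have : A j i ≠ 0 := fun h0 => by simp [h0] at h4
    exact (altCoords_nonneg (by omega) (by omega) (by linarith) t).1
  obtain ⟨m, hm, hrel, hpos⟩ := exists_altProd_s_eq_of_mul_lt_four hij hji hzero (not_le.1 h4)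
  have hbound := altLength_altProd_le_of_eq (s_mul_self i) (s_mul_self j) hm hrel (t + 1)
  rw [altProd_succ, ← hv'] at hbound
  exact hpos t (by omega)

end RankTwo

section Positivity

variable {A : Matrix (Fin n) (Fin n) ℤ}

theorem len_eq_wordLength (h2 : ∀ i, A i i = 2) : len A h2 = wordLength (s A h2) := rfl

theorem len_mul_s {h2 : ∀ i, A i i = 2} {w : (Fin n → ℤ) ≃ₗ[ℤ] (Fin n → ℤ)} (hw : w ∈ weyl A h2)
    (i : Fin n) :
    len A h2 (w * s A h2 i) = len A h2 w + 1 ∨ len A h2 w = len A h2 (w * s A h2 i) + 1 :=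
  wordLength_mul_gen s_mul_self det_s hw i

theorem apply_single_nonneg_of_len_lt (hA : IsGCM A) {w : (Fin n → ℤ) ≃ₗ[ℤ] (Fin n → ℤ)}
    (hw : w ∈ weyl A hA.1) {i : Fin n} (h : len A hA.1 w < len A hA.1 (w * s A hA.1 i)) :
    0 ≤ w (Pi.single i 1) := by
  rw [len_eq_wordLength] at h
  induction hN : wordLength (s A hA.1) w using Nat.strong_induction_on generalizing w i with
  | _ N ih =>
  rcases Nat.eq_zero_or_pos N with hN0 | hpos
  · rw [eq_one_of_wordLength_eq_zero s_mul_self hw (hN.trans hN0)]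
    exact Pi.single_nonneg.2 zero_le_one
  obtain ⟨u₀, j, rfl, hu₀⟩ := exists_eq_mul_gen_of_wordLength_pos s_mul_self hw (by omega)
  have hij : i ≠ j := by
    rintro rfl
    rw [mul_assoc, s_mul_self, mul_one] at h
    omega
  obtain ⟨u, v, hu, hv, huv, hlen, hmin⟩ :=
    exists_eq_minimal_mul_isAltProd s_mul_self det_s hw i j
  have hvi : altLength (s A hA.1 i) (s A hA.1 j) v <
      altLength (s A hA.1 i) (s A hA.1 j) (v * s A hA.1 i) := by
    by_contra hvi
    have := wordLength_mul_le_add_altLength s_mul_self hu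
      (hv.mul_right (s_mul_self i) (s_mul_self j) (Or.inl rfl))
    rw [← mul_assoc, ← huv] at this
    omega
  have hul : wordLength (s A hA.1) u < N := by
    by_contra hul
    have hv1 : v = 1 := by
      have h0 : altLength (s A hA.1 i) (s A hA.1 j) v = 0 := by omega
      rcases hv.eq_altProd_altLength with hv' | hv' <;> simpa [h0] using hv'
    have hu₀ : u = u₀ * s A hA.1 j := by rw [huv, hv1, mul_one]
    have := hmin j (Or.inr rfl)
    rw [hu₀, mul_assoc, s_mul_self, mul_one] at this
    omega
  obtain ⟨x, y, hx, hy, hxy⟩ := hv.s_apply_single_eq_of_altLength_lt (hA.2.1 i j hij)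
    (hA.2.1 j i hij.symm) (hA.2.2 i j) hvi
  rw [huv, LinearEquiv.mul_apply, hxy, map_add, map_smul, map_smul]
  exact add_nonneg (smul_nonneg hx (ih _ hul hu (hmin i (Or.inl rfl)) rfl))
    (smul_nonneg hy (ih _ hul hu (hmin j (Or.inr rfl)) rfl))

end Positivity

section Roots

variable {A : Matrix (Fin n) (Fin n) ℤ}

theorem apply_single_nonpos_of_len_lt (hA : IsGCM A) {w : (Fin n → ℤ) ≃ₗ[ℤ] (Fin n → ℤ)}
    (hw : w ∈ weyl A hA.1) {i : Fin n} (h : len A hA.1 (w * s A hA.1 i) < len A hA.1 w) :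
    w (Pi.single i 1) ≤ 0 := by
  have := apply_single_nonneg_of_len_lt hA (mul_mem hw (s_mem_weyl i))
    (by rwa [mul_assoc, s_mul_self, mul_one])
  rwa [LinearEquiv.mul_apply, s_apply_single_self, map_neg, neg_nonneg] at this

theorem apply_mem_realRoots {h2 : ∀ i, A i i = 2} {w : (Fin n → ℤ) ≃ₗ[ℤ] (Fin n → ℤ)}
    (hw : w ∈ weyl A h2) {γ : Fin n → ℤ} (hγ : γ ∈ realRoots A h2) : w γ ∈ realRoots A h2 := by
  obtain ⟨g, hg, i, rfl⟩ := hγ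
  exact ⟨w * g, mul_mem hw hg, i, rfl⟩

theorem neg_mem_realRoots {h2 : ∀ i, A i i = 2} {γ : Fin n → ℤ} (hγ : γ ∈ realRoots A h2) :
    -γ ∈ realRoots A h2 := by
  obtain ⟨g, hg, i, rfl⟩ := hγ
  exact ⟨g * s A h2 i, mul_mem hg (s_mem_weyl i), i, by
    rw [LinearEquiv.mul_apply, s_apply_single_self, map_neg]⟩

theorem ne_zero_of_mem_realRoots {h2 : ∀ i, A i i = 2} {γ : Fin n → ℤ}
    (hγ : γ ∈ realRoots A h2) : γ ≠ 0 := by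
  obtain ⟨g, -, i, rfl⟩ := hγ
  simp

theorem nonneg_or_nonpos_of_mem_realRoots (hA : IsGCM A) {γ : Fin n → ℤ}
    (hγ : γ ∈ realRoots A hA.1) : 0 ≤ γ ∨ γ ≤ 0 := by
  obtain ⟨w, hw, i, rfl⟩ := hγ
  rcases len_mul_s hw i with h | h
  · exact Or.inl (apply_single_nonneg_of_len_lt hA hw (by omega))
  · exact Or.inr (apply_single_nonpos_of_len_lt hA hw (by omega))

/-- Real roots are primitive vectors. -/
theorem eq_single_of_mem_realRoots {h2 : ∀ i, A i i = 2} {γ : Fin n → ℤ}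
    (hγ : γ ∈ realRoots A h2) (h0 : 0 ≤ γ) {q : Fin n} (hq : ∀ t, t ≠ q → γ t = 0) :
    γ = Pi.single q 1 := by
  have hγq : γ = γ q • Pi.single q 1 := by
    ext t
    by_cases ht : t = q
    · subst ht; simp
    · simp [hq t ht, ht]
  obtain ⟨g, -, p, hgp⟩ := hγ
  have hp := congrFun (congrArg g.symm (hγq ▸ hgp)) p
  simp only [LinearEquiv.symm_apply_apply, Pi.single_eq_same, map_smul, Pi.smul_apply,
    smul_eq_mul] at hp
  rw [hγq, Int.eq_one_of_mul_eq_one_right (h0 q) hp, one_smul]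

theorem mul_apply_nonpos_of_len_mul (hA : IsGCM A) {u v : (Fin n → ℤ) ≃ₗ[ℤ] (Fin n → ℤ)}
    (hu : u ∈ weyl A hA.1) (hv : v ∈ weyl A hA.1)
    (hlen : len A hA.1 (u * v) = len A hA.1 u + len A hA.1 v) {γ : Fin n → ℤ}
    (hγ : γ ∈ realRoots A hA.1) (h0 : 0 ≤ γ) (hvγ : v γ ≤ 0) : (u * v) γ ≤ 0 := by
  rw [len_eq_wordLength] at hlen
  induction hN : wordLength (s A hA.1) v using Nat.strong_induction_on generalizing v γ with
  | _ N ih =>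
  rcases Nat.eq_zero_or_pos N with hN0 | hpos
  · rw [eq_one_of_wordLength_eq_zero s_mul_self hv (hN.trans hN0)] at hvγ
    exact absurd (le_antisymm hvγ h0) (ne_zero_of_mem_realRoots hγ)
  obtain ⟨v', q, rfl, hv'⟩ := exists_eq_mul_gen_of_wordLength_pos s_mul_self hv (by omega)
  have hv'W : v' ∈ weyl A hA.1 := by
    simpa [mul_assoc, s_mul_self] using mul_mem hv (s_mem_weyl (h2 := hA.1) q)
  rw [← mul_assoc] at hlen
  have hle₁ := wordLength_mul_le s_mul_self hu hv'W
  have hle₂ := wordLength_mul_gen_le s_mul_self (mul_mem hu hv'W) q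
  have hqγ := apply_mem_realRoots (s_mem_weyl q) hγ
  rcases nonneg_or_nonpos_of_mem_realRoots hA hqγ with hq | hq
  · exact ih _ (by omega) hv'W (by omega) hqγ hq hvγ rfl
  · have hγq : γ = Pi.single q 1 := eq_single_of_mem_realRoots hγ h0 fun t ht =>
      le_antisymm (s_apply_of_ne ht γ ▸ hq t) (h0 t)
    subst hγq
    have := apply_single_nonneg_of_len_lt hA (mul_mem hu hv'W) (i := q) (by
      rw [len_eq_wordLength]; omega)
    rw [← mul_assoc, LinearEquiv.mul_apply, s_apply_single_self, map_neg]
    exact neg_nonpos.2 this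

theorem le_apply_of_mulVec_nonpos (hA : IsGCM A) {w : (Fin n → ℤ) ≃ₗ[ℤ] (Fin n → ℤ)}
    (hw : w ∈ weyl A hA.1) {κ : Fin n → ℤ} (hκ : A *ᵥ κ ≤ 0) : κ ≤ w κ := by
  induction hN : wordLength (s A hA.1) w using Nat.strong_induction_on generalizing w with
  | _ N ih =>
  rcases Nat.eq_zero_or_pos N with hN0 | hpos
  · rw [eq_one_of_wordLength_eq_zero s_mul_self hw (hN.trans hN0)]
    rfl
  obtain ⟨w', q, rfl, hw'⟩ := exists_eq_mul_gen_of_wordLength_pos s_mul_self hw (by omega)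
  have hw'W : w' ∈ weyl A hA.1 := by
    simpa [mul_assoc, s_mul_self] using mul_mem hw (s_mem_weyl (h2 := hA.1) q)
  have hq := apply_single_nonneg_of_len_lt hA hw'W (i := q) (by rw [len_eq_wordLength]; omega)
  calc κ ≤ w' κ := ih _ (by omega) hw'W rfl
    _ ≤ w' κ - (A *ᵥ κ) q • w' (Pi.single q 1) :=
      (le_sub_self_iff _).2 (smul_nonpos_of_nonpos_of_nonneg (hκ q) hq)
    _ = (w' * s A hA.1 q) κ := by rw [LinearEquiv.mul_apply, s_apply, map_sub, map_smul]

end Roots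

section Signs

variable {A : Matrix (Fin n) (Fin n) ℤ}

theorem mem_posRoots_iff_of_mem_realRoots (hA : IsGCM A) {γ : Fin n → ℤ}
    (hγ : γ ∈ realRoots A hA.1) : γ ∈ posRoots A hA.1 hA.2.2 ↔ 0 ≤ γ :=
  ⟨fun h => h.2.2, fun h => ⟨Or.inl (Or.inl hγ), ne_zero_of_mem_realRoots hγ, h⟩⟩

theorem mem_negRoots_iff_of_mem_realRoots (hA : IsGCM A) {γ : Fin n → ℤ}
    (hγ : γ ∈ realRoots A hA.1) : γ ∈ negRoots A hA.1 hA.2.2 ↔ γ ≤ 0 := by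
  rw [negRoots, Set.mem_neg, mem_posRoots_iff_of_mem_realRoots hA (neg_mem_realRoots hγ),
    neg_nonneg]

theorem apply_mem_posImRoots {h2 : ∀ i, A i i = 2} {hsym : ∀ i j, A i j = 0 ↔ A j i = 0}
    {w : (Fin n → ℤ) ≃ₗ[ℤ] (Fin n → ℤ)} (hw : w ∈ weyl A h2) {γ : Fin n → ℤ}
    (hγ : γ ∈ posImRoots A h2 hsym) : w γ ∈ posImRoots A h2 hsym := by
  obtain ⟨g, hg, κ, hκ, rfl⟩ := hγ
  exact ⟨w * g, mul_mem hw hg, κ, hκ, rfl⟩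

theorem mem_posRoots_of_mem_posImRoots (hA : IsGCM A) {γ : Fin n → ℤ}
    (hγ : γ ∈ posImRoots A hA.1 hA.2.2) : γ ∈ posRoots A hA.1 hA.2.2 := by
  obtain ⟨g, hg, κ, ⟨⟨hκ0, hκ⟩, -, hAκ⟩, rfl⟩ := id hγ
  have hκγ := le_apply_of_mulVec_nonpos hA hg hAκ
  refine ⟨Or.inl (Or.inr hγ), fun hγ0 => hκ0 ?_, fun t => (hκ t).trans (hκγ t)⟩
  exact le_antisymm (hγ0 ▸ hκγ) hκ

theorem not_isPos_of_neg_mem_posImRoots (hA : IsGCM A) {α : Fin n → ℤ}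
    (hα : -α ∈ posImRoots A hA.1 hA.2.2) : ¬IsPos α := fun ⟨hα0, hαnonneg⟩ => by
  obtain ⟨-, -, hpos⟩ := mem_posRoots_of_mem_posImRoots hA hα
  exact hα0 (neg_eq_zero.1 (le_antisymm (neg_nonpos.2 hαnonneg) hpos))

theorem zpow_apply_nonpos_of_le (hA : IsGCM A) {ω : (Fin n → ℤ) ≃ₗ[ℤ] (Fin n → ℤ)}
    (hω : ω ∈ weyl A hA.1) (hlen : ∀ l : ℤ, len A hA.1 (ω ^ l) = l.natAbs * len A hA.1 ω)
    {γ : Fin n → ℤ} (hγ : γ ∈ realRoots A hA.1) {a b c : ℤ} (hab : a ≤ b) (hbc : b ≤ c)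
    (ha : 0 ≤ (ω ^ a) γ) (hb : (ω ^ b) γ ≤ 0) : (ω ^ c) γ ≤ 0 := by
  have hshift : ∀ k l : ℤ, (ω ^ (l - k)) ((ω ^ k) γ) = (ω ^ l) γ := fun k l => by
    rw [← LinearEquiv.mul_apply, ← _root_.zpow_add, sub_add_cancel]
  have hadd : len A hA.1 (ω ^ (c - b) * ω ^ (b - a)) =
      len A hA.1 (ω ^ (c - b)) + len A hA.1 (ω ^ (b - a)) := by
    rw [← _root_.zpow_add, hlen, hlen, hlen, ← add_mul]
    congr 1
    omega
  have := mul_apply_nonpos_of_len_mul hA (zpow_mem hω _) (zpow_mem hω _) hadd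
    (apply_mem_realRoots (zpow_mem hω a) hγ) ha (by rwa [hshift])
  rwa [LinearEquiv.mul_apply, hshift, hshift] at this

theorem forall_imp_or_forall_imp_of_switch_persists {P N : ℤ → Prop} (hPN : ∀ z, P z ∨ N z)
    (hexcl : ∀ z, P z → ¬N z) (hPN' : ∀ a b c, a ≤ b → b ≤ c → P a → N b → N c)
    (hNP : ∀ a b c, a ≤ b → b ≤ c → N a → P b → P c) :
    (∀ k l, k ≤ l → N k → N l) ∨ (∀ k l, k ≤ l → P k → P l) := by
  by_contra! h
  obtain ⟨⟨k, l, hkl, hk, hl⟩, ⟨k', l', hkl', hk', hl'⟩⟩ := h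
  exact hexcl (max l l')
    (hNP k l _ hkl (le_max_left l l') hk ((hPN l).resolve_right hl))
    (hPN' k' l' _ hkl' (le_max_right l l') hk' ((hPN l').resolve_left hl'))

theorem zpow_apply_sign_monotone_of_mem_realRoots (hA : IsGCM A)
    {ω : (Fin n → ℤ) ≃ₗ[ℤ] (Fin n → ℤ)} (hω : ω ∈ weyl A hA.1)
    (hlen : ∀ l : ℤ, len A hA.1 (ω ^ l) = l.natAbs * len A hA.1 ω)
    {γ : Fin n → ℤ} (hγ : γ ∈ realRoots A hA.1) :
    (∀ k l : ℤ, k ≤ l → (ω ^ k) γ ≤ 0 → (ω ^ l) γ ≤ 0) ∨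
      (∀ k l : ℤ, k ≤ l → 0 ≤ (ω ^ k) γ → 0 ≤ (ω ^ l) γ) := by
  have hroot (z : ℤ) : (ω ^ z) γ ∈ realRoots A hA.1 := apply_mem_realRoots (zpow_mem hω z) hγ
  refine forall_imp_or_forall_imp_of_switch_persists
    (fun z => nonneg_or_nonpos_of_mem_realRoots hA (hroot z))
    (fun z h0 h0' => ne_zero_of_mem_realRoots (hroot z) (le_antisymm h0' h0))
    (fun a b c hab hbc => zpow_apply_nonpos_of_le hA hω hlen hγ hab hbc)
    (fun a b c hab hbc ha hb => ?_)
  simpa using zpow_apply_nonpos_of_le hA hω hlen (neg_mem_realRoots hγ) hab hbc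
    (by simpa using ha) (by simpa using hb)

end Signs

theorem sign_monotonic_of_straight_general (n : ℕ) (A : Matrix (Fin n) (Fin n) ℤ)
    (hA : IsGCM A)
    (ω : (Fin n → ℤ) ≃ₗ[ℤ] (Fin n → ℤ)) (hω : ω ∈ weyl A hA.1)
    (hlen : ∀ l : ℤ, len A hA.1 (ω ^ l) = l.natAbs * len A hA.1 ω)
    (α : Fin n → ℤ) (hα : α ∈ posRoots A hA.1 hA.2.2) :
    (∀ k l : ℤ, k ≤ l → (ω ^ k) α ∈ negRoots A hA.1 hA.2.2 →
        (ω ^ l) α ∈ negRoots A hA.1 hA.2.2) ∨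
      (∀ k l : ℤ, k ≤ l → (ω ^ k) α ∈ posRoots A hA.1 hA.2.2 →
        (ω ^ l) α ∈ posRoots A hA.1 hA.2.2) := by
  obtain ⟨(hre | him) | hneg, hαpos⟩ := hα
  · have hpos (z : ℤ) := mem_posRoots_iff_of_mem_realRoots hA
      (apply_mem_realRoots (zpow_mem hω z) hre)
    have hneg (z : ℤ) := mem_negRoots_iff_of_mem_realRoots hA
      (apply_mem_realRoots (zpow_mem hω z) hre)
    simpa only [hpos, hneg] using zpow_apply_sign_monotone_of_mem_realRoots hA hω hlen hre
  · exact Or.inr fun k l _ _ =>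
      mem_posRoots_of_mem_posImRoots hA (apply_mem_posImRoots (zpow_mem hω l) him)
  · exact absurd hαpos (not_isPos_of_neg_mem_posImRoots hA hneg)

/-- if `A` is indecomposable with infinite Weyl group, `ω ∈ W` satisfies
`ℓ(ω^l) = |l|·ℓ(ω)` for all `l ∈ ℤ`, and `α ∈ Δ₊`, then the sign of `ω^k α` is a monotonic
function of `k ∈ ℤ`. -/
theorem sign_monotonic_of_straight (n : ℕ) (hn : 1 ≤ n) (A : Matrix (Fin n) (Fin n) ℤ)
    (hA : IsGCM A) (hInd : Indecomposable A hA.2.2)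
    (hWinf : Infinite (weyl A hA.1))
    (ω : (Fin n → ℤ) ≃ₗ[ℤ] (Fin n → ℤ)) (hω : ω ∈ weyl A hA.1)
    (hlen : ∀ l : ℤ, len A hA.1 (ω ^ l) = l.natAbs * len A hA.1 ω)
    (α : Fin n → ℤ) (hα : α ∈ posRoots A hA.1 hA.2.2) :
    (∀ k l : ℤ, k ≤ l → (ω ^ k) α ∈ negRoots A hA.1 hA.2.2 →
        (ω ^ l) α ∈ negRoots A hA.1 hA.2.2) ∨
      (∀ k l : ℤ, k ≤ l → (ω ^ k) α ∈ posRoots A hA.1 hA.2.2 →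
        (ω ^ l) α ∈ posRoots A hA.1 hA.2.2) :=
  sign_monotonic_of_straight_general n A hA ω hω hlen α hα

end KacMoodyPaper
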